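/- arXiv:0907.5334 — 4 statements merged into one kernel-verified Lean document; each statement's English description precedes it below -/
import Mathlib

section
/- Let Ω be a compact metric space and τ : Ω → Ω an isometry. If τ has a dense orbit (i.e., there is ω₀ such that {τⁿ(ω₀) : n ∈ ℤ} is dense in Ω), then τ is uniquely ergodic: there is exactly one τ-invariant Borel probability measure on Ω. -/
/-!
Existence is the Krylov–Bogolyubov argument: a weak-* limit point of the empirical measures
along an orbit is invariant, because their integrals against `g ∘ τ` and `g` differ by `O(1/n)`.

For uniqueness, the Birkhoff averages of a continuous `g` form an equicontinuous family since `τ`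
is an isometry, so the set of points whose averages are asymptotic to those at `ω₀` is closed.
It is `τ`-invariant and contains `ω₀`, hence it is everything by density of the orbit.
Integrating against an invariant `μ` (dominated convergence) then shows that the averages at `ω₀`
converge to `∫ g ∂μ`, which therefore does not depend on `μ`.
-/

open MeasureTheory Filter Topology Set
open scoped ENNReal BoundedContinuousFunction

lemma birkhoffAverage_comp_self {X : Type*} (f : X → X) (g : X → ℝ) (n : ℕ) (x : X) :
    birkhoffAverage ℝ f (g ∘ f) n x = birkhoffAverage ℝ f g n (f x) := by
  simp only [birkhoffAverage, birkhoffSum, Function.comp_apply,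
    (Function.Commute.self_iterate f _).eq]

lemma continuous_birkhoffAverage {X : Type*} [TopologicalSpace X] {f : X → X} {g : X → ℝ}
    (hf : Continuous f) (hg : Continuous g) (n : ℕ) :
    Continuous (birkhoffAverage ℝ f g n) := by
  unfold birkhoffAverage birkhoffSum
  fun_prop

lemma dist_birkhoffAverage_le_two_mul_norm {X : Type*} [TopologicalSpace X] (f : X → X)
    (g : X →ᵇ ℝ) (n : ℕ) (x y : X) :
    dist (birkhoffAverage ℝ f g n x) (birkhoffAverage ℝ f g n y) ≤ 2 * ‖g‖ := by
  calc dist (birkhoffAverage ℝ f g n x) (birkhoffAverage ℝ f g n y)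
      ≤ (∑ k ∈ Finset.range n, dist (g (f^[k] x)) (g (f^[k] y))) / n :=
        dist_birkhoffAverage_birkhoffAverage_le ..
    _ ≤ (∑ _k ∈ Finset.range n, 2 * ‖g‖) / n := by gcongr; exact g.dist_le_two_norm _ _
    _ = n * (2 * ‖g‖) / n := by simp
    _ ≤ 2 * ‖g‖ := by
      rcases eq_or_ne n 0 with hn | hn <;> simp [hn, mul_div_cancel_left₀]

lemma UniformEquicontinuous.sub_const {ι α β : Type*} [PseudoMetricSpace β]
    [SeminormedAddCommGroup α] {F : ι → β → α} (hF : UniformEquicontinuous F) (c : ι → α) :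
    UniformEquicontinuous fun i x => F i x - c i := by
  rw [Metric.uniformEquicontinuous_iff] at hF ⊢
  simpa only [dist_sub_right] using hF

section Empirical

variable {X : Type*} [MeasurableSpace X]

noncomputable def empiricalMeasure (f : X → X) (n : ℕ) (x : X) : Measure X :=
  (n : ℝ≥0∞)⁻¹ • ∑ k ∈ Finset.range n, Measure.dirac (f^[k] x)

lemma isProbabilityMeasure_empiricalMeasure (f : X → X) {n : ℕ} (hn : n ≠ 0) (x : X) :
    IsProbabilityMeasure (empiricalMeasure f n x) := by
  constructor
  simp [empiricalMeasure, ENNReal.inv_mul_cancel, hn]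

lemma integral_empiricalMeasure (f : X → X) (n : ℕ) (x : X) {g : X → ℝ}
    (hg : StronglyMeasurable g) :
    ∫ y, g y ∂empiricalMeasure f n x = birkhoffAverage ℝ f g n x := by
  rw [empiricalMeasure, integral_smul_measure, integral_finsetSum_measure]
  · simp [birkhoffAverage, birkhoffSum, integral_dirac' _ _ hg]
  · intro k _
    exact integrable_dirac' hg (by simp)

end Empirical

section KrylovBogolyubov

variable {X : Type*} [MetricSpace X] [CompactSpace X] [Nonempty X]
  [MeasurableSpace X] [BorelSpace X]

theorem exists_isProbabilityMeasure_measurePreserving {f : X → X} (hf : Continuous f) :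
    ∃ μ : Measure X, IsProbabilityMeasure μ ∧ MeasurePreserving f μ μ := by
  let x : X := Classical.arbitrary X
  let ν : ℕ → ProbabilityMeasure X := fun n =>
    ⟨empiricalMeasure f (n + 1) x, isProbabilityMeasure_empiricalMeasure f n.succ_ne_zero x⟩
  let U : Ultrafilter ℕ := .of atTop
  obtain ⟨μ, -, hνμ⟩ := isCompact_univ.ultrafilter_le_nhds (U.map ν) (by simp)
  refine ⟨μ, inferInstance, hf.measurable, ext_of_forall_integral_eq_of_IsFiniteMeasure fun g => ?_⟩
  let g_f : X →ᵇ ℝ := g.compContinuous ⟨f, hf⟩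
  have h_birkhoff : Tendsto (fun n => ∫ y, (g_f - g) y ∂(ν n : Measure X)) U (𝓝 0) := by
    refine ((tendsto_birkhoffAverage_apply_sub_birkhoffAverage' ℝ g.isBounded_range f x).comp
      (tendsto_add_atTop_nat 1)).mono_left (Ultrafilter.of_le _) |>.congr fun n => ?_
    rw [Function.comp_apply, show (ν n : Measure X) = empiricalMeasure f (n + 1) x from rfl,
      integral_empiricalMeasure _ _ _ (g_f - g).continuous.stronglyMeasurable, BoundedContinuousFunction.coe_sub,
      birkhoffAverage_sub, ← birkhoffAverage_comp_self]
    rfl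
  have h_weak : Tendsto (fun n => ∫ y, (g_f - g) y ∂(ν n : Measure X)) U
      (𝓝 (∫ y, (g_f - g) y ∂(μ : Measure X))) :=
    (ProbabilityMeasure.continuous_integral_boundedContinuousFunction _).continuousAt.tendsto.comp
      hνμ
  have h_int := tendsto_nhds_unique h_weak h_birkhoff
  simp only [BoundedContinuousFunction.sub_apply] at h_int
  rw [integral_sub (g_f.integrable _) (g.integrable _), sub_eq_zero] at h_int
  rw [integral_map hf.aemeasurable g.continuous.aestronglyMeasurable]
  exact h_int

end KrylovBogolyubov

section Integral

variable {X : Type*} [MeasurableSpace X] {μ : Measure X} {f : X → X}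

lemma MeasureTheory.measurePreserving_self_iff (hf : Measurable f) :
    MeasurePreserving f μ μ ↔ ∀ E : Set X, MeasurableSet E → μ (f ⁻¹' E) = μ E :=
  ⟨fun h E hE => h.measure_preimage hE.nullMeasurableSet,
    fun h => ⟨hf, Measure.ext fun E hE => by rw [Measure.map_apply hf hE, h E hE]⟩⟩

lemma MeasureTheory.MeasurePreserving.integral_comp_iterate (hf : MeasurePreserving f μ μ)
    {g : X → ℝ} (hg : AEStronglyMeasurable g μ) (k : ℕ) :
    ∫ x, g (f^[k] x) ∂μ = ∫ x, g x ∂μ := by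
  have hfk := hf.iterate k
  conv_rhs => rw [← hfk.map_eq]
  rw [integral_map hfk.measurable.aemeasurable (by rwa [hfk.map_eq])]

lemma MeasureTheory.MeasurePreserving.integral_birkhoffAverage (hf : MeasurePreserving f μ μ)
    {g : X → ℝ} (hg : Integrable g μ) {n : ℕ} (hn : n ≠ 0) :
    ∫ x, birkhoffAverage ℝ f g n x ∂μ = ∫ x, g x ∂μ := by
  have hint (k : ℕ) : Integrable (fun x => g (f^[k] x)) μ :=
    ((hf.iterate k).integrable_comp hg.aestronglyMeasurable).2 hg
  simp only [birkhoffAverage, birkhoffSum, smul_eq_mul]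
  rw [integral_const_mul, integral_finsetSum _ fun k _ => hint k]
  simp [hf.integral_comp_iterate hg.aestronglyMeasurable, hn]

end Integral

section DenseOrbit

variable {X : Type*} [MetricSpace X] {τ : X ≃ᵢ X}

lemma IsometryEquiv.zpow_apply_mem {S : Set X} (hS : ∀ x, τ x ∈ S ↔ x ∈ S) {x : X}
    (hx : x ∈ S) (m : ℤ) : (τ ^ m) x ∈ S := by
  induction m using Int.induction_on with
  | zero => simpa using hx
  | succ m ih => rwa [add_comm, zpow_one_add, IsometryEquiv.mul_apply, hS]
  | pred m ih =>
    rw [← hS, ← IsometryEquiv.mul_apply, ← zpow_one_add]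
    simpa using ih

lemma eq_univ_of_isClosed_of_dense_orbit {x₀ : X}
    (hdense : Dense (range fun n : ℤ => (τ ^ n) x₀)) {S : Set X} (hS_closed : IsClosed S)
    (hS : ∀ x, τ x ∈ S ↔ x ∈ S) (hx₀ : x₀ ∈ S) : S = univ := by
  refine eq_univ_of_univ_subset ?_
  rw [← hdense.closure_eq]
  exact closure_minimal (range_subset_iff.2 (IsometryEquiv.zpow_apply_mem hS hx₀)) hS_closed

variable [CompactSpace X] {x₀ : X}

lemma tendsto_birkhoffAverage_sub_of_dense_orbit (hdense : Dense (range fun n : ℤ => (τ ^ n) x₀))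
    (g : X →ᵇ ℝ) (x : X) :
    Tendsto (fun n => birkhoffAverage ℝ τ g n x - birkhoffAverage ℝ τ g n x₀) atTop (𝓝 0) := by
  set S := {y | Tendsto (fun n => birkhoffAverage ℝ τ g n y - birkhoffAverage ℝ τ g n x₀)
    atTop (𝓝 0)}
  have hS_closed : IsClosed S :=
    ((uniformEquicontinuous_birkhoffAverage ℝ τ.isometry.lipschitz
      (CompactSpace.uniformContinuous_of_continuous g.continuous)).sub_const
      _).equicontinuous.isClosed_setOfPred_tendsto continuous_const
  have hS (y : X) : τ y ∈ S ↔ y ∈ S := by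
    simp only [S, mem_ofPred_eq]
    have hstep := tendsto_birkhoffAverage_apply_sub_birkhoffAverage' ℝ g.isBounded_range τ y
    constructor <;> intro hy
    · simpa using hy.sub hstep
    · simpa using hstep.add hy
  have hx₀ : x₀ ∈ S := by simp [S]
  exact eq_univ_iff_forall.1 (eq_univ_of_isClosed_of_dense_orbit hdense hS_closed hS hx₀) x

variable [MeasurableSpace X] [BorelSpace X]

theorem tendsto_birkhoffAverage_integral_of_dense_orbit
    (hdense : Dense (range fun n : ℤ => (τ ^ n) x₀)) {μ : Measure X} [IsProbabilityMeasure μ]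
    (hμ : MeasurePreserving τ μ μ) (g : X →ᵇ ℝ) :
    Tendsto (fun n => birkhoffAverage ℝ τ g n x₀) atTop (𝓝 (∫ x, g x ∂μ)) := by
  have h_dom : Tendsto (fun n => ∫ x, (birkhoffAverage ℝ τ g n x - birkhoffAverage ℝ τ g n x₀) ∂μ)
      atTop (𝓝 0) := by
    simpa using tendsto_integral_of_dominated_convergence (fun _ => 2 * ‖g‖)
      (fun n => ((continuous_birkhoffAverage τ.continuous g.continuous n).sub
        continuous_const).aestronglyMeasurable) (integrable_const _)
      (fun n => ae_of_all _ fun x => by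
        simpa [← dist_eq_norm] using dist_birkhoffAverage_le_two_mul_norm τ g n x x₀)
      (ae_of_all _ (tendsto_birkhoffAverage_sub_of_dense_orbit hdense g))
  have h_lim := (tendsto_const_nhds (x := ∫ x, g x ∂μ)).sub h_dom
  rw [sub_zero] at h_lim
  refine h_lim.congr' ?_
  filter_upwards [eventually_ne_atTop 0] with n hn
  rw [integral_sub ((continuous_birkhoffAverage τ.continuous g.continuous n)
      |>.integrable_of_hasCompactSupport (.of_compactSpace _)) (integrable_const _),
    hμ.integral_birkhoffAverage (g.integrable μ) hn]
  simp

theorem eq_of_measurePreserving_of_dense_orbit (hdense : Dense (range fun n : ℤ => (τ ^ n) x₀))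
    {μ ν : Measure X} [IsProbabilityMeasure μ] [IsProbabilityMeasure ν]
    (hμ : MeasurePreserving τ μ μ) (hν : MeasurePreserving τ ν ν) : μ = ν :=
  ext_of_forall_integral_eq_of_IsFiniteMeasure fun g =>
    tendsto_nhds_unique (tendsto_birkhoffAverage_integral_of_dense_orbit hdense hμ g)
      (tendsto_birkhoffAverage_integral_of_dense_orbit hdense hν g)

end DenseOrbit

/-- An isometry of a compact metric space with a dense (two-sided) orbit is uniquely
ergodic: there is exactly one invariant Borel probability measure. -/
theorem stmt_3 {Ω : Type*} [MetricSpace Ω] [CompactSpace Ω]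
    [MeasurableSpace Ω] [BorelSpace Ω]
    (τ : Ω ≃ᵢ Ω) (ω₀ : Ω) (hdense : Dense (Set.range fun n : ℤ => (τ ^ n) ω₀)) :
    ∃! μ : Measure Ω, IsProbabilityMeasure μ ∧
      ∀ E : Set Ω, MeasurableSet E → μ (τ ⁻¹' E) = μ E := by
  have : Nonempty Ω := ⟨ω₀⟩
  obtain ⟨μ, hμ, hμτ⟩ := exists_isProbabilityMeasure_measurePreserving τ.continuous
  refine ⟨μ, ⟨hμ, (measurePreserving_self_iff τ.continuous.measurable).1 hμτ⟩, ?_⟩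
  rintro ν ⟨hν, hντ⟩
  exact eq_of_measurePreserving_of_dense_orbit hdense
    ((measurePreserving_self_iff τ.continuous.measurable).2 hντ) hμτ
end

section
/- Let f : ℝᴺ → ℂ be almost periodic, write it as f = Σ_{n=1}^∞ g_n with ∥g_n∥_∞ ≤ C·2^{-n}, where each g_n is a trigonometric polynomial g_n(x) = G_n(⟨λ₁,x⟩,…,⟨λ_{k_n},x⟩) for continuous G_n : 𝕋^{k_n} → ℂ. Then the functions ω ↦ G_n(π_{k_n}(ω)) on 𝕋^∞ satisfy the same uniform bound C·2^{-n}, and the series Σ_n G_n ∘ π_{k_n} converges uniformly on 𝕋^∞ to a continuous function f̲ with f̲(τ_x(0)) = f(x) for all x ∈ ℝᴺ, where τ_x is the translation (τ_x ω)_j = ω_j + ⟨λ_j, x⟩ (mod 1). -/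
open Filter

/-- If the almost-periodic function f = Σ g_n, with trigonometric polynomials
g_n(x) = G_n(⟨λ₁,x⟩, …, ⟨λ_{k_n},x⟩) satisfying ‖g_n‖_∞ ≤ C 2^{-n}, and the orbit
{τ_x 0 : x ∈ ℝᴺ} is dense in 𝕋^∞, then the functions G_n ∘ π_{k_n} satisfy the same
bound on 𝕋^∞, and Σ_n G_n ∘ π_{k_n} converges uniformly to a continuous f̲ with
f̲(τ_x 0) = f(x). -/
theorem stmt_9 {N : ℕ} (lam : ℕ → Fin N → ℝ) (C : ℝ)
    (k : ℕ → ℕ) (G : ∀ n : ℕ, ((Fin (k n) → AddCircle (1 : ℝ)) → ℂ))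
    (hGcont : ∀ n, Continuous (G n))
    (τ : (Fin N → ℝ) → (ℕ → AddCircle (1 : ℝ)) → (ℕ → AddCircle (1 : ℝ)))
    (hτ : ∀ x ω j, τ x ω j = ω j + ((∑ i, lam j i * x i : ℝ) : AddCircle (1 : ℝ)))
    (hdense : Dense (Set.range fun x : Fin N → ℝ => τ x 0))
    (g : ℕ → (Fin N → ℝ) → ℂ)
    (hg : ∀ n x, g n x =
      G n (fun j : Fin (k n) => ((∑ i, lam (j : ℕ) i * x i : ℝ) : AddCircle (1 : ℝ))))
    (hbound : ∀ n x, ‖g n x‖ ≤ C * (1 / 2 : ℝ) ^ n)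
    (f : (Fin N → ℝ) → ℂ)
    (hsum : ∀ x, HasSum (fun n => g n x) (f x)) :
    (∀ (n : ℕ) (ω : ℕ → AddCircle (1 : ℝ)),
        ‖G n (fun j : Fin (k n) => ω (j : ℕ))‖ ≤ C * (1 / 2 : ℝ) ^ n) ∧
    ∃ fbar : (ℕ → AddCircle (1 : ℝ)) → ℂ, Continuous fbar ∧
      TendstoUniformly
        (fun (m : ℕ) (ω : ℕ → AddCircle (1 : ℝ)) =>
          ∑ n ∈ Finset.range m, G n (fun j : Fin (k n) => ω (j : ℕ)))
        fbar atTop ∧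
      ∀ x : Fin N → ℝ, fbar (τ x 0) = f x := by

  -- the composed functions on the torus
  set F : ℕ → (ℕ → AddCircle (1 : ℝ)) → ℂ :=
    fun n ω => G n (fun j : Fin (k n) => ω (j : ℕ)) with hF
  have hFcont : ∀ n, Continuous (F n) := fun n =>
    (hGcont n).comp (continuous_pi fun j => continuous_apply _)
  have horbit : ∀ n x, F n (τ x 0) = g n x := by
    intro n x
    rw [hg n x]
    show G n _ = G n _
    congr 1
    funext j
    rw [hτ]
    simp
  have hFbound : ∀ n ω, ‖F n ω‖ ≤ C * (1 / 2 : ℝ) ^ n := by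
    intro n
    have hcl : IsClosed {ω : ℕ → AddCircle (1 : ℝ) | ‖F n ω‖ ≤ C * (1 / 2 : ℝ) ^ n} :=
      isClosed_le ((hFcont n).norm) continuous_const
    have hsub : Set.range (fun x : Fin N → ℝ => τ x 0) ⊆
        {ω | ‖F n ω‖ ≤ C * (1 / 2 : ℝ) ^ n} := by
      rintro _ ⟨x, rfl⟩
      simp only [Set.mem_setOf_eq, horbit n x]
      exact hbound n x
    have := hcl.closure_subset_iff.2 hsub
    have hall : (Set.univ : Set (ℕ → AddCircle (1 : ℝ))) ⊆
        {ω | ‖F n ω‖ ≤ C * (1 / 2 : ℝ) ^ n} := by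
      rw [← hdense.closure_eq]
      exact this
    exact fun ω => hall (Set.mem_univ ω)
  refine ⟨hFbound, fun ω => ∑' n, F n ω, ?_, ?_, ?_⟩
  · exact continuous_tsum hFcont (summable_geometric_two.mul_left C) hFbound
  · exact tendstoUniformly_tsum_nat (summable_geometric_two.mul_left C) hFbound
  · intro x
    have h1 : HasSum (fun n => F n (τ x 0)) (f x) := by
      have := hsum x
      simpa [horbit] using this
    exact h1.tsum_eq
end

section
/- Let H : ℝᴺ × ℝᴺ → ℝ be continuous, convex in p, with α(|p|) ≤ H(x,p) ≤ β(|p|) for superlinear α, β. Then for any a < b there exists δ = δ(a,b) > 0 such that Z_a(x) + B_δ ⊆ Z_b(x) for every x ∈ ℝᴺ, where Z_a(x) = {p : H(x,p) ≤ a} and B_δ is the closed ball of radius δ centered at 0. -/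
open Filter

/-- Uniform fattening of sublevel sets: for a < b there is δ > 0 with
Z_a(x) + B_δ ⊆ Z_b(x) for every x. -/
theorem stmt_12 {N : ℕ}
    (H : EuclideanSpace ℝ (Fin N) → EuclideanSpace ℝ (Fin N) → ℝ)
    (hHcont : Continuous fun z : EuclideanSpace ℝ (Fin N) × EuclideanSpace ℝ (Fin N) =>
      H z.1 z.2)
    (hconv : ∀ x, ConvexOn ℝ Set.univ (H x))
    (α β : ℝ → ℝ)
    (hα : Tendsto (fun t => α t / t) atTop atTop)
    (hβ : Tendsto (fun t => β t / t) atTop atTop)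
    (hbounds : ∀ x p, α ‖p‖ ≤ H x p ∧ H x p ≤ β ‖p‖)
    (a b : ℝ) (hab : a < b) :
    ∃ δ : ℝ, 0 < δ ∧ ∀ x p q, H x p ≤ a → ‖q‖ ≤ δ → H x (p + q) ≤ b := by
  -- κ: sublevel sets are contained in ball of radius κ
  obtain ⟨κ₀, hκ₀⟩ := (eventually_atTop).1 (hα.eventually_ge_atTop (|a| + 1))
  set κ : ℝ := max κ₀ 1 with hκdef
  have hκ1 : (1:ℝ) ≤ κ := le_max_right _ _
  have hκbound : ∀ x p, H x p ≤ a → ‖p‖ ≤ κ := by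
    intro x p hp
    by_contra h
    push_neg at h
    have h1 : (1:ℝ) ≤ ‖p‖ := le_trans hκ1 h.le
    have h2 : |a| + 1 ≤ α ‖p‖ / ‖p‖ := hκ₀ ‖p‖ (le_trans (le_max_left _ _) h.le)
    have h3 : (|a| + 1) * ‖p‖ ≤ α ‖p‖ := by
      have := mul_le_mul_of_nonneg_right h2 (norm_nonneg p)
      rwa [div_mul_cancel₀ _ (by positivity : ‖p‖ ≠ 0)] at this
    have h4 : |a| + 1 ≤ α ‖p‖ := le_trans (by nlinarith [abs_nonneg a]) h3
    have h5 : α ‖p‖ ≤ a := le_trans (hbounds x p).1 hp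
    have := le_abs_self a
    linarith
  set R : ℝ := κ + 1 with hRdef
  have hR : (0:ℝ) < R := by linarith
  set C : ℝ := max (β 0) (β R) with hCdef
  -- H is bounded above by C on the ball of radius R
  have hball : ∀ x p, ‖p‖ ≤ R → H x p ≤ C := by
    intro x p hp
    rcases eq_or_ne p 0 with rfl | hp0
    · have h0 := (hbounds x 0).2
      rw [norm_zero] at h0
      exact h0.trans (le_max_left _ _)
    · have hpn : (0:ℝ) < ‖p‖ := norm_pos_iff.2 hp0
      set u : EuclideanSpace ℝ (Fin N) := (R / ‖p‖) • p with hu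
      have hun : ‖u‖ = R := by
        rw [hu, norm_smul, Real.norm_eq_abs, abs_of_pos (by positivity),
          div_mul_cancel₀ _ (ne_of_gt hpn)]
      set t : ℝ := ‖p‖ / R with ht
      have ht0 : 0 < t := by positivity
      have ht1 : t ≤ 1 := by
        rw [ht, div_le_one hR]; exact hp
      have hcomb : p = t • u + (1 - t) • (0 : EuclideanSpace ℝ (Fin N)) := by
        rw [hu, smul_zero, add_zero, smul_smul, ht,
          div_mul_div_comm, mul_comm, ← div_mul_div_comm,
          div_self (ne_of_gt hR), div_self (ne_of_gt hpn), one_mul, one_smul]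
      have hcv := (hconv x).2 (Set.mem_univ u) (Set.mem_univ (0 : EuclideanSpace ℝ (Fin N)))
        ht0.le (by linarith : (0:ℝ) ≤ 1 - t) (by ring)
      rw [← hcomb] at hcv
      have hu' : H x u ≤ C := by
        have := (hbounds x u).2
        rw [hun] at this
        exact this.trans (le_max_right _ _)
      have h0' : H x 0 ≤ C := by
        have h0 := (hbounds x 0).2
        rw [norm_zero] at h0
        exact h0.trans (le_max_left _ _)
      calc H x p ≤ t * H x u + (1 - t) * H x 0 := hcv
        _ ≤ t * C + (1 - t) * C := by
            apply add_le_add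
            · exact mul_le_mul_of_nonneg_left hu' ht0.le
            · exact mul_le_mul_of_nonneg_left h0' (by linarith)
        _ = C := by ring
  -- choose λ and δ
  set lam : ℝ := min 1 ((b - a) / (|C - a| + 1)) with hlam
  have hlam0 : 0 < lam := by
    apply lt_min one_pos
    apply div_pos (by linarith) (by positivity)
  have hlam1 : lam ≤ 1 := min_le_left _ _
  have hlamC : lam * (C - a) ≤ b - a := by
    have h1 : lam * (C - a) ≤ lam * |C - a| :=
      mul_le_mul_of_nonneg_left (le_abs_self _) hlam0.le
    have h2 : lam ≤ (b - a) / (|C - a| + 1) := min_le_right _ _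
    have h3 : lam * |C - a| ≤ ((b - a) / (|C - a| + 1)) * |C - a| :=
      mul_le_mul_of_nonneg_right h2 (abs_nonneg _)
    have h4 : ((b - a) / (|C - a| + 1)) * |C - a| ≤ b - a := by
      rw [div_mul_eq_mul_div, div_le_iff₀ (by positivity)]
      nlinarith [abs_nonneg (C - a)]
    linarith
  refine ⟨lam, hlam0, fun x p q hp hq => ?_⟩
  have hpκ : ‖p‖ ≤ κ := hκbound x p hp
  set r : EuclideanSpace ℝ (Fin N) := p + lam⁻¹ • q with hr
  have hrn : ‖r‖ ≤ R := by
    calc ‖r‖ ≤ ‖p‖ + ‖lam⁻¹ • q‖ := norm_add_le _ _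
      _ = ‖p‖ + lam⁻¹ * ‖q‖ := by
          rw [norm_smul, Real.norm_eq_abs, abs_of_pos (by positivity)]
      _ ≤ κ + lam⁻¹ * lam := by
          apply add_le_add hpκ
          exact mul_le_mul_of_nonneg_left hq (by positivity)
      _ = R := by rw [inv_mul_cancel₀ (ne_of_gt hlam0)]
  have hrC : H x r ≤ C := hball x r hrn
  have hcomb : p + q = (1 - lam) • p + lam • r := by
    rw [hr, smul_add, smul_smul, mul_inv_cancel₀ (ne_of_gt hlam0), one_smul,
      ← add_assoc, ← add_smul]
    norm_num
  have hcv := (hconv x).2 (Set.mem_univ p) (Set.mem_univ r)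
    (by linarith : (0:ℝ) ≤ 1 - lam) hlam0.le (by ring)
  rw [← hcomb] at hcv
  calc H x (p + q) ≤ (1 - lam) * H x p + lam * H x r := hcv
    _ ≤ (1 - lam) * a + lam * C := by
        apply add_le_add
        · exact mul_le_mul_of_nonneg_left hp (by linarith)
        · exact mul_le_mul_of_nonneg_left hrC hlam0.le
    _ = a + lam * (C - a) := by ring
    _ ≤ b := by linarith
end

section
/- Let C be a compact metric space, S : C × C → ℝ continuous with the triangle inequality and S(x,y)+S(y,x) > 0 for x ≠ y, g : C → ℝ continuous with g(x) − g(y) ≤ S(y,x) for all x,y, and ≻ the partial order y₁ ≻ y₂ ⇔ g(y₂) = g(y₁) + S(y₁,y₂). Then every totally ordered subset E of C has an upper bound in C with respect to ≻; consequently, by Zorn's lemma, C contains a maximal element for ≻. -/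
/-- On a compact metric space, every chain for the order y₁ ≻ y₂ ⇔ g(y₂) = g(y₁)+S(y₁,y₂)
has an upper bound; consequently (Zorn) there is a maximal element. -/
theorem stmt_16 {C : Type*} [MetricSpace C] [CompactSpace C] [Nonempty C]
    (S : C → C → ℝ) (hScont : Continuous fun p : C × C => S p.1 p.2)
    (htri : ∀ x y z, S x y ≤ S x z + S z y)
    (hzero : ∀ x, S x x = 0)
    (hpos : ∀ x y, x ≠ y → 0 < S x y + S y x)
    (g : C → ℝ) (hgcont : Continuous g)
    (hg : ∀ x y, g x - g y ≤ S y x)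
    (r : C → C → Prop) (hr : ∀ y₁ y₂, r y₁ y₂ ↔ g y₂ = g y₁ + S y₁ y₂) :
    (∀ E : Set C, IsChain r E → ∃ u : C, ∀ y ∈ E, r u y) ∧
    ∃ m : C, ∀ y : C, r y m → y = m := by
  classical
  -- The "deficiency" d x y = S x y + g x - g y is nonnegative, satisfies the
  -- triangle inequality, and r x y ↔ d x y = 0.
  set d : C → C → ℝ := fun x y => S x y + g x - g y with hd
  have hdcont : Continuous fun p : C × C => d p.1 p.2 := by
    simp only [hd]
    exact ((hScont.add (hgcont.comp continuous_fst)).sub (hgcont.comp continuous_snd))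
  have hd0 : ∀ x y, 0 ≤ d x y := fun x y => by
    have := hg y x; simp only [hd]; linarith
  have hdtri : ∀ x y z, d x y ≤ d x z + d z y := fun x y z => by
    have := htri x y z; simp only [hd]; linarith
  have hre : ∀ x y, r x y ↔ d x y = 0 := fun x y => by
    rw [hr]; simp only [hd]; constructor <;> intro h <;> linarith
  have hdxx : ∀ x, d x x = 0 := fun x => by simp [hd, hzero]
  -- Part 1: every chain has an upper bound.
  have part1 : ∀ E : Set C, IsChain r E → ∃ u : C, ∀ y ∈ E, r u y := by
    intro E hE
    rcases E.eq_empty_or_nonempty with hEe | hEne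
    · exact ⟨Classical.arbitrary C, by simp [hEe]⟩
    -- The closure of E is totally ordered.
    have hclosF : IsClosed {p : C × C | d p.1 p.2 * d p.2 p.1 = 0} :=
      isClosed_eq (hdcont.mul (hdcont.comp continuous_swap)) continuous_const
    have hsub : E ×ˢ E ⊆ {p : C × C | d p.1 p.2 * d p.2 p.1 = 0} := by
      rintro ⟨x, y⟩ ⟨hx, hy⟩
      by_cases hxy : x = y
      · simp [Set.mem_setOf_eq, hxy, hdxx]
      · rcases hE hx hy hxy with h | h
        · simp [Set.mem_setOf_eq, (hre x y).mp h]
        · simp [Set.mem_setOf_eq, (hre y x).mp h]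
    have hchainF : ∀ x ∈ closure E, ∀ y ∈ closure E, d x y = 0 ∨ d y x = 0 := by
      intro x hx y hy
      have : (x, y) ∈ closure (E ×ˢ E) := by
        rw [closure_prod_eq]; exact ⟨hx, hy⟩
      have hmem : (x, y) ∈ {p : C × C | d p.1 p.2 * d p.2 p.1 = 0} :=
        hclosF.closure_subset (closure_mono hsub this)
      rcases mul_eq_zero.mp hmem with h | h
      · exact Or.inl h
      · exact Or.inr h
    -- Nested compact sets of elements "above" x, for x in the closure.
    haveI : Nonempty (closure E) := ⟨⟨hEne.some, subset_closure hEne.some_mem⟩⟩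
    set t : closure E → Set C := fun x => {y | y ∈ closure E ∧ d y x.1 = 0} with ht
    have htclosed : ∀ x, IsClosed (t x) := by
      intro x
      exact isClosed_closure.inter
        (isClosed_eq (hdcont.comp (continuous_id.prodMk continuous_const)) continuous_const)
    have hmono : ∀ a b : closure E, d a.1 b.1 = 0 → t a ⊆ t b := by
      rintro a b hab y ⟨hy, hya⟩
      refine ⟨hy, le_antisymm ?_ (hd0 _ _)⟩
      calc d y b.1 ≤ d y a.1 + d a.1 b.1 := hdtri _ _ _
        _ = 0 := by rw [hya, hab, add_zero]
    have hdir : Directed (· ⊇ ·) t := by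
      intro a b
      rcases hchainF a.1 a.2 b.1 b.2 with h | h
      · exact ⟨a, subset_rfl, hmono a b h⟩
      · exact ⟨b, hmono b a h, subset_rfl⟩
    have htne : ∀ x, (t x).Nonempty := fun x => ⟨x.1, x.2, hdxx _⟩
    obtain ⟨u, hu⟩ := IsCompact.nonempty_iInter_of_directed_nonempty_isCompact_isClosed
      t hdir htne (fun x => (htclosed x).isCompact) htclosed
    refine ⟨u, fun y hy => ?_⟩
    have := Set.mem_iInter.mp hu ⟨y, subset_closure hy⟩
    exact (hre u y).mpr this.2
  refine ⟨part1, ?_⟩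
  -- Part 2: Zorn's lemma for the flipped relation.
  have htrans : ∀ {a b c : C}, r b a → r c b → r c a := by
    intro a b c hba hcb
    rw [hre] at hba hcb ⊢
    refine le_antisymm ?_ (hd0 _ _)
    calc d c a ≤ d c b + d b a := hdtri _ _ _
      _ = 0 := by rw [hba, hcb, add_zero]
  obtain ⟨m, hm⟩ := exists_maximal_of_chains_bounded
    (r := fun a b => r b a)
    (fun c hc => by
      have : IsChain r c := fun a ha b hb hab => (hc ha hb hab).symm
      obtain ⟨u, hu⟩ := part1 c this
      exact ⟨u, fun a ha => hu a ha⟩)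
    (fun {a b c} hab hbc => htrans hab hbc)
  refine ⟨m, fun y hym => ?_⟩
  have hmy : r m y := hm y hym
  by_contra hne
  have h1 := (hre y m).mp hym
  have h2 := (hre m y).mp hmy
  have := hpos y m hne
  simp only [hd] at h1 h2
  linarith
end
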